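/- arXiv:2501.07383 — 3 statements merged into one kernel-verified Lean document; each statement's English description precedes it below -/
import Mathlib

section
/- Let x̄ ∈ M be a feasible point of MPCC at which MPCC-LICQ holds. Then there exist t̄ > 0 and a neighborhood U of x̄ such that for every t ∈ (0, t̄) and every feasible point x ∈ M^S(t) ∩ U of the Scholtes regularization S(t), LICQ holds at x. -/
open Filter Topology Set

namespace MPCCPaper

variable {n κ : ℕ}

/-- Differential of the `j`-th component of `F` at `x`. -/
noncomputable def Dc (F : (Fin n → ℝ) → Fin κ → ℝ) (j : Fin κ) (x : Fin n → ℝ) :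
    (Fin n → ℝ) →L[ℝ] ℝ :=
  fderiv ℝ (fun y => F y j) x

/-- The MPCC feasible set `M`. -/
def Mset (F1 F2 : (Fin n → ℝ) → Fin κ → ℝ) : Set (Fin n → ℝ) :=
  {x | ∀ j, F1 x j * F2 x j = 0 ∧ 0 ≤ F1 x j ∧ 0 ≤ F2 x j}

/-- Feasible set `M^S(t)` of the Scholtes regularization. -/
def MS (F1 F2 : (Fin n → ℝ) → Fin κ → ℝ) (t : ℝ) : Set (Fin n → ℝ) :=
  {x | ∀ j, F1 x j * F2 x j ≤ t ∧ 0 ≤ F1 x j ∧ 0 ≤ F2 x j}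

/-- Feasible set `M^{S=}(t)` of the smoothing with equality constraints. -/
def MSeq (F1 F2 : (Fin n → ℝ) → Fin κ → ℝ) (t : ℝ) : Set (Fin n → ℝ) :=
  {x | ∀ j, F1 x j * F2 x j = t ∧ 0 ≤ F1 x j ∧ 0 ≤ F2 x j}

def a01 (F1 F2 : (Fin n → ℝ) → Fin κ → ℝ) (x : Fin n → ℝ) : Set (Fin κ) :=
  {j | F1 x j = 0 ∧ 0 < F2 x j}

def a10 (F1 F2 : (Fin n → ℝ) → Fin κ → ℝ) (x : Fin n → ℝ) : Set (Fin κ) :=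
  {j | 0 < F1 x j ∧ F2 x j = 0}

def a00 (F1 F2 : (Fin n → ℝ) → Fin κ → ℝ) (x : Fin n → ℝ) : Set (Fin κ) :=
  {j | F1 x j = 0 ∧ F2 x j = 0}

/-- Active set `H(x)` of the regularized constraints. -/
def Hset (F1 F2 : (Fin n → ℝ) → Fin κ → ℝ) (t : ℝ) (x : Fin n → ℝ) : Set (Fin κ) :=
  {j | F1 x j * F2 x j = t}

def N1set (F1 : (Fin n → ℝ) → Fin κ → ℝ) (x : Fin n → ℝ) : Set (Fin κ) :=
  {j | F1 x j = 0}

def N2set (F2 : (Fin n → ℝ) → Fin κ → ℝ) (x : Fin n → ℝ) : Set (Fin κ) :=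
  {j | F2 x j = 0}

/-- MPCC-tailored linear independence constraint qualification. -/
def MPCCLICQ (F1 F2 : (Fin n → ℝ) → Fin κ → ℝ) (x : Fin n → ℝ) : Prop :=
  LinearIndependent ℝ
    (Sum.elim
      (fun j : ↥(a01 F1 F2 x ∪ a00 F1 F2 x) => Dc F1 j.1 x)
      (fun j : ↥(a10 F1 F2 x ∪ a00 F1 F2 x) => Dc F2 j.1 x))

/-- Gradient of the product constraint `F1_j · F2_j` at `x`. -/
noncomputable def gradProd (F1 F2 : (Fin n → ℝ) → Fin κ → ℝ) (j : Fin κ) (x : Fin n → ℝ) :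
    (Fin n → ℝ) →L[ℝ] ℝ :=
  F2 x j • Dc F1 j x + F1 x j • Dc F2 j x

/-- LICQ for the Scholtes regularization `S(t)`. -/
def SLICQ (F1 F2 : (Fin n → ℝ) → Fin κ → ℝ) (t : ℝ) (x : Fin n → ℝ) : Prop :=
  LinearIndependent ℝ
    (Sum.elim (fun j : ↥(Hset F1 F2 t x) => gradProd F1 F2 j.1 x)
      (Sum.elim (fun j : ↥(N1set F1 x) => Dc F1 j.1 x)
        (fun j : ↥(N2set F2 x) => Dc F2 j.1 x)))

/-- W-stationarity with prescribed multipliers (supported on the active index sets). -/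
structure WStatWith (f : (Fin n → ℝ) → ℝ) (F1 F2 : (Fin n → ℝ) → Fin κ → ℝ)
    (x : Fin n → ℝ) (σ1 σ2 ϱ1 ϱ2 : Fin κ → ℝ) : Prop where
  feas : x ∈ Mset F1 F2
  supp_s1 : ∀ j, j ∉ a01 F1 F2 x → σ1 j = 0
  supp_s2 : ∀ j, j ∉ a10 F1 F2 x → σ2 j = 0
  supp_r1 : ∀ j, j ∉ a00 F1 F2 x → ϱ1 j = 0
  supp_r2 : ∀ j, j ∉ a00 F1 F2 x → ϱ2 j = 0
  stat : fderiv ℝ f x =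
    ∑ j, (σ1 j • Dc F1 j x + σ2 j • Dc F2 j x + ϱ1 j • Dc F1 j x + ϱ2 j • Dc F2 j x)

/-- C-stationarity with prescribed multipliers. -/
def CStatWith (f : (Fin n → ℝ) → ℝ) (F1 F2 : (Fin n → ℝ) → Fin κ → ℝ)
    (x : Fin n → ℝ) (σ1 σ2 ϱ1 ϱ2 : Fin κ → ℝ) : Prop :=
  WStatWith f F1 F2 x σ1 σ2 ϱ1 ϱ2 ∧ ∀ j ∈ a00 F1 F2 x, 0 ≤ ϱ1 j * ϱ2 j

/-- S-stationarity with prescribed multipliers. -/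
def SStatWith (f : (Fin n → ℝ) → ℝ) (F1 F2 : (Fin n → ℝ) → Fin κ → ℝ)
    (x : Fin n → ℝ) (σ1 σ2 ϱ1 ϱ2 : Fin κ → ℝ) : Prop :=
  WStatWith f F1 F2 x σ1 σ2 ϱ1 ϱ2 ∧ ∀ j ∈ a00 F1 F2 x, 0 ≤ ϱ1 j ∧ 0 ≤ ϱ2 j

/-- The MPCC Lagrange function for given multipliers. -/
noncomputable def Lag (f : (Fin n → ℝ) → ℝ) (F1 F2 : (Fin n → ℝ) → Fin κ → ℝ)
    (σ1 σ2 ϱ1 ϱ2 : Fin κ → ℝ) (x : Fin n → ℝ) : ℝ :=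
  f x - ∑ j, (σ1 j * F1 x j + σ2 j * F2 x j + ϱ1 j * F1 x j + ϱ2 j * F2 x j)

/-- The Hessian of `g` at `x` as a bilinear map, evaluated at `(ξ, ζ)`. -/
noncomputable def hBil (g : (Fin n → ℝ) → ℝ) (x ξ ζ : Fin n → ℝ) : ℝ :=
  iteratedFDeriv ℝ 2 g x ![ξ, ζ]

/-- The Hessian quadratic form of `g` at `x`. -/
noncomputable def hQ (g : (Fin n → ℝ) → ℝ) (x ξ : Fin n → ℝ) : ℝ := hBil g x ξ ξ

/-- The tangent space `T_x` of MPCC at `x`. -/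
def Tspace (F1 F2 : (Fin n → ℝ) → Fin κ → ℝ) (x : Fin n → ℝ) : Set (Fin n → ℝ) :=
  {ξ | (∀ j ∈ a01 F1 F2 x ∪ a00 F1 F2 x, Dc F1 j x ξ = 0) ∧
       (∀ j ∈ a10 F1 F2 x ∪ a00 F1 F2 x, Dc F2 j x ξ = 0)}

/-- Nondegeneracy of a bilinear form on a set (subspace). -/
def NondegOn (B : (Fin n → ℝ) → (Fin n → ℝ) → ℝ) (T : Set (Fin n → ℝ)) : Prop :=
  ∀ ξ ∈ T, (∀ ζ ∈ T, B ξ ζ = 0) → ξ = 0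

/-- `Q` has negative index `q` on `T`: `q` is the maximal dimension of a subspace of `T`
on which `Q` is negative definite. -/
def HasNegIndexOn (Q : (Fin n → ℝ) → ℝ) (T : Set (Fin n → ℝ)) (q : ℕ) : Prop :=
  (∃ W : Submodule ℝ (Fin n → ℝ), (W : Set (Fin n → ℝ)) ⊆ T ∧
      Module.finrank ℝ ↥W = q ∧ ∀ ξ ∈ W, ξ ≠ 0 → Q ξ < 0) ∧
  (∀ W : Submodule ℝ (Fin n → ℝ), (W : Set (Fin n → ℝ)) ⊆ T →
      (∀ ξ ∈ W, ξ ≠ 0 → Q ξ < 0) → Module.finrank ℝ ↥W ≤ q)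

/-- Nondegenerate C-stationary point (NDC1, NDC2, NDC3) with prescribed multipliers. -/
def NondegCStat (f : (Fin n → ℝ) → ℝ) (F1 F2 : (Fin n → ℝ) → Fin κ → ℝ)
    (x : Fin n → ℝ) (σ1 σ2 ϱ1 ϱ2 : Fin κ → ℝ) : Prop :=
  CStatWith f F1 F2 x σ1 σ2 ϱ1 ϱ2 ∧ MPCCLICQ F1 F2 x ∧
  (∀ j ∈ a00 F1 F2 x, 0 < ϱ1 j * ϱ2 j) ∧
  NondegOn (hBil (Lag f F1 F2 σ1 σ2 ϱ1 ϱ2) x) (Tspace F1 F2 x)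

/-- Condition NDC4: non-biactive multipliers do not vanish. -/
def NDC4 (F1 F2 : (Fin n → ℝ) → Fin κ → ℝ) (x : Fin n → ℝ) (σ1 σ2 : Fin κ → ℝ) : Prop :=
  (∀ j ∈ a01 F1 F2 x, σ1 j ≠ 0) ∧ (∀ j ∈ a10 F1 F2 x, σ2 j ≠ 0)

/-- The biactive index: number of negative biactive multiplier pairs. -/
noncomputable def BIndex (F1 F2 : (Fin n → ℝ) → Fin κ → ℝ) (x : Fin n → ℝ)
    (ϱ1 ϱ2 : Fin κ → ℝ) : ℕ :=
  {j | j ∈ a00 F1 F2 x ∧ ϱ1 j < 0 ∧ ϱ2 j < 0}.ncard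

/-- The C-index of a C-stationary point equals `c`. -/
def HasCIndex (f : (Fin n → ℝ) → ℝ) (F1 F2 : (Fin n → ℝ) → Fin κ → ℝ)
    (x : Fin n → ℝ) (σ1 σ2 ϱ1 ϱ2 : Fin κ → ℝ) (c : ℕ) : Prop :=
  ∃ q : ℕ,
    HasNegIndexOn (hQ (Lag f F1 F2 σ1 σ2 ϱ1 ϱ2) x) (Tspace F1 F2 x) q ∧
    c = q + BIndex F1 F2 x ϱ1 ϱ2

/-- Karush-Kuhn-Tucker point of the Scholtes regularization `S(t)` with multipliers. -/
structure KKTWith (f : (Fin n → ℝ) → ℝ) (F1 F2 : (Fin n → ℝ) → Fin κ → ℝ)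
    (t : ℝ) (x : Fin n → ℝ) (η ν1 ν2 : Fin κ → ℝ) : Prop where
  feas : x ∈ MS F1 F2 t
  eta_nn : ∀ j, 0 ≤ η j
  nu1_nn : ∀ j, 0 ≤ ν1 j
  nu2_nn : ∀ j, 0 ≤ ν2 j
  comp_eta : ∀ j, η j * (t - F1 x j * F2 x j) = 0
  comp_nu1 : ∀ j, ν1 j * F1 x j = 0
  comp_nu2 : ∀ j, ν2 j * F2 x j = 0
  stat : fderiv ℝ f x =
    ∑ j, (-(η j) • gradProd F1 F2 j x + ν1 j • Dc F1 j x + ν2 j • Dc F2 j x)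

/-- The Lagrange function of the Scholtes regularization `S(t)`. -/
noncomputable def LagS (f : (Fin n → ℝ) → ℝ) (F1 F2 : (Fin n → ℝ) → Fin κ → ℝ)
    (t : ℝ) (η ν1 ν2 : Fin κ → ℝ) (x : Fin n → ℝ) : ℝ :=
  f x - ∑ j, (η j * (t - F1 x j * F2 x j) + ν1 j * F1 x j + ν2 j * F2 x j)

/-- The tangent space `T^S_x` of `S(t)` at `x`. -/
def TspaceS (F1 F2 : (Fin n → ℝ) → Fin κ → ℝ) (t : ℝ) (x : Fin n → ℝ) :
    Set (Fin n → ℝ) :=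
  {ξ | (∀ j ∈ Hset F1 F2 t x, gradProd F1 F2 j x ξ = 0) ∧
       (∀ j ∈ N1set F1 x, Dc F1 j x ξ = 0) ∧
       (∀ j ∈ N2set F2 x, Dc F2 j x ξ = 0)}

/-- Nondegenerate KKT point of `S(t)` (ND1, ND2, ND3) with prescribed multipliers. -/
def NondegKKT (f : (Fin n → ℝ) → ℝ) (F1 F2 : (Fin n → ℝ) → Fin κ → ℝ)
    (t : ℝ) (x : Fin n → ℝ) (η ν1 ν2 : Fin κ → ℝ) : Prop :=
  KKTWith f F1 F2 t x η ν1 ν2 ∧ SLICQ F1 F2 t x ∧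
  (∀ j ∈ Hset F1 F2 t x, 0 < η j) ∧
  (∀ j ∈ N1set F1 x, 0 < ν1 j) ∧
  (∀ j ∈ N2set F2 x, 0 < ν2 j) ∧
  NondegOn (hBil (LagS f F1 F2 t η ν1 ν2) x) (TspaceS F1 F2 t x)

/-- KKT point of the smoothing `S^=(t)` with multipliers. -/
structure KKTEqWith (f : (Fin n → ℝ) → ℝ) (F1 F2 : (Fin n → ℝ) → Fin κ → ℝ)
    (t : ℝ) (x : Fin n → ℝ) (lam ν1 ν2 : Fin κ → ℝ) : Prop where
  feas : x ∈ MSeq F1 F2 t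
  nu1_nn : ∀ j, 0 ≤ ν1 j
  nu2_nn : ∀ j, 0 ≤ ν2 j
  comp_nu1 : ∀ j, ν1 j * F1 x j = 0
  comp_nu2 : ∀ j, ν2 j * F2 x j = 0
  stat : fderiv ℝ f x =
    ∑ j, (lam j • gradProd F1 F2 j x + ν1 j • Dc F1 j x + ν2 j • Dc F2 j x)

/-- The Lagrange function of the smoothing `S^=(t)`. -/
noncomputable def LagSeq (f : (Fin n → ℝ) → ℝ) (F1 F2 : (Fin n → ℝ) → Fin κ → ℝ)
    (t : ℝ) (lam ν1 ν2 : Fin κ → ℝ) (x : Fin n → ℝ) : ℝ :=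
  f x - ∑ j, (lam j * (F1 x j * F2 x j - t) + ν1 j * F1 x j + ν2 j * F2 x j)

/-- The tangent space `T^{S=}_x` of `S^=(t)` at `x`. -/
def TspaceSeq (F1 F2 : (Fin n → ℝ) → Fin κ → ℝ) (x : Fin n → ℝ) : Set (Fin n → ℝ) :=
  {ξ | (∀ j, gradProd F1 F2 j x ξ = 0) ∧
       (∀ j, F1 x j = 0 → Dc F1 j x ξ = 0) ∧
       (∀ j, F2 x j = 0 → Dc F2 j x ξ = 0)}

/-- LICQ for the smoothing `S^=(t)` at `x`: gradients of all active constraints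
(all equality constraints together with the active bound constraints) are linearly
independent. -/
def SeqLICQ (F1 F2 : (Fin n → ℝ) → Fin κ → ℝ) (x : Fin n → ℝ) : Prop :=
  LinearIndependent ℝ
    (Sum.elim (fun j : Fin κ => gradProd F1 F2 j x)
      (Sum.elim (fun j : ↥(N1set F1 x) => Dc F1 j.1 x)
        (fun j : ↥(N2set F2 x) => Dc F2 j.1 x)))

/-- Nondegenerate KKT point of the smoothing `S^=(t)` with prescribed multipliers. -/
def NondegKKTEq (f : (Fin n → ℝ) → ℝ) (F1 F2 : (Fin n → ℝ) → Fin κ → ℝ)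
    (t : ℝ) (x : Fin n → ℝ) (lam ν1 ν2 : Fin κ → ℝ) : Prop :=
  KKTEqWith f F1 F2 t x lam ν1 ν2 ∧ SeqLICQ F1 F2 x ∧
  (∀ j ∈ N1set F1 x, 0 < ν1 j) ∧
  (∀ j ∈ N2set F2 x, 0 < ν2 j) ∧
  NondegOn (hBil (LagSeq f F1 F2 t lam ν1 ν2) x) (TspaceSeq F1 F2 x)

/-- The critical cone `C_x` associated with an S-stationary point and its multipliers. -/
def Ccone (F1 F2 : (Fin n → ℝ) → Fin κ → ℝ) (x : Fin n → ℝ)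
    (σ1 σ2 ϱ1 ϱ2 : Fin κ → ℝ) : Set (Fin n → ℝ) :=
  {ξ | (∀ j, ((j ∈ a01 F1 F2 x ∧ σ1 j ≠ 0) ∨ (j ∈ a00 F1 F2 x ∧ 0 < ϱ1 j)) →
        Dc F1 j x ξ = 0) ∧
       (∀ j, ((j ∈ a10 F1 F2 x ∧ σ2 j ≠ 0) ∨ (j ∈ a00 F1 F2 x ∧ 0 < ϱ2 j)) →
        Dc F2 j x ξ = 0)}

/-- The cone `C^=_x` of critical directions used for MPCC-SOC. -/
def CconeEq (F1 F2 : (Fin n → ℝ) → Fin κ → ℝ) (x : Fin n → ℝ)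
    (ϱ1 ϱ2 : Fin κ → ℝ) : Set (Fin n → ℝ) :=
  {ξ | (∀ j, (j ∈ a01 F1 F2 x ∨ (j ∈ a00 F1 F2 x ∧ 0 < ϱ1 j)) → Dc F1 j x ξ = 0) ∧
       (∀ j, (j ∈ a10 F1 F2 x ∨ (j ∈ a00 F1 F2 x ∧ 0 < ϱ2 j)) → Dc F2 j x ξ = 0) ∧
       (∀ j ∈ a00 F1 F2 x, ϱ1 j = 0 → 0 ≤ Dc F1 j x ξ) ∧
       (∀ j ∈ a00 F1 F2 x, ϱ2 j = 0 → 0 ≤ Dc F2 j x ξ)}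

/-- Strong second order sufficiency condition. -/
def SSOSC (f : (Fin n → ℝ) → ℝ) (F1 F2 : (Fin n → ℝ) → Fin κ → ℝ)
    (x : Fin n → ℝ) (σ1 σ2 ϱ1 ϱ2 : Fin κ → ℝ) : Prop :=
  ∀ ξ ∈ Ccone F1 F2 x σ1 σ2 ϱ1 ϱ2, ξ ≠ 0 → 0 < hQ (Lag f F1 F2 σ1 σ2 ϱ1 ϱ2) x ξ

/-- Second order condition for MPCC (MPCC-SOC). -/
def MPCCSOC (f : (Fin n → ℝ) → ℝ) (F1 F2 : (Fin n → ℝ) → Fin κ → ℝ)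
    (x : Fin n → ℝ) (σ1 σ2 ϱ1 ϱ2 : Fin κ → ℝ) : Prop :=
  ∀ ξ ∈ CconeEq F1 F2 x ϱ1 ϱ2, ξ ≠ 0 → 0 < hQ (Lag f F1 F2 σ1 σ2 ϱ1 ϱ2) x ξ


lemma sum_subtype_of_zero_off {α : Type*} {M : Type*} [Fintype α] [AddCommMonoid M]
    (s : Set α) [Fintype ↥s] (f : α → M) (hf : ∀ j ∉ s, f j = 0) :
    ∑ i : ↥s, f i.1 = ∑ j, f j := by
  classical
  rw [← Finset.sum_subtype s.toFinset (fun x => Set.mem_toFinset) f]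
  exact Finset.sum_subset (Finset.subset_univ _) (fun x _ hx => hf x (by simpa using hx))

set_option maxHeartbeats 1000000 in
/-- MPCC-LICQ at a feasible point of MPCC implies LICQ for the Scholtes
regularization at all nearby feasible points, for all sufficiently small `t > 0`. -/
theorem scholtes_licq_inherited
    {n κ : ℕ} (f : (Fin n → ℝ) → ℝ) (F1 F2 : (Fin n → ℝ) → Fin κ → ℝ)
    (hf : ContDiff ℝ 2 f) (hF1 : ContDiff ℝ 2 F1) (hF2 : ContDiff ℝ 2 F2)
    (xbar : Fin n → ℝ) (hfeas : xbar ∈ Mset F1 F2) (hlicq : MPCCLICQ F1 F2 xbar) :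
    ∃ tbar > (0:ℝ), ∃ U ∈ 𝓝 xbar, ∀ t ∈ Set.Ioo (0:ℝ) tbar,
      ∀ y ∈ MS F1 F2 t ∩ U, SLICQ F1 F2 t y := by
  classical
  by_contra hcon
  push_neg at hcon
  have hstep : ∀ k : ℕ, ∃ tk ∈ Set.Ioo (0:ℝ) (1/(k+1)),
      ∃ zk ∈ MS F1 F2 tk ∩ Metric.ball xbar (1/(k+1)), ¬ SLICQ F1 F2 tk zk := by
    intro k
    exact hcon (1/(k+1)) (by positivity) (Metric.ball xbar (1/(k+1)))
      (Metric.ball_mem_nhds _ (by positivity))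
  choose t ht z hz hns using hstep
  -- Step 1: extract normalized dependence coefficients at each k
  have key : ∀ k : ℕ, ∃ c : (Fin κ → ℝ) × (Fin κ → ℝ), ‖c‖ = 1 ∧
      (∑ j : Fin κ, (c.1 j • Dc F1 j (z k) + c.2 j • Dc F2 j (z k)) = 0) ∧
      (∀ j, c.1 j * F1 (z k) j = c.2 j * F2 (z k) j) := by
    intro k
    set x := z k with hxdef
    have hnLI : ¬ LinearIndependent ℝ
        (Sum.elim (fun j : ↥(Hset F1 F2 (t k) x) => gradProd F1 F2 j.1 x)
          (Sum.elim (fun j : ↥(N1set F1 x) => Dc F1 j.1 x)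
            (fun j : ↥(N2set F2 x) => Dc F2 j.1 x))) := hns k
    obtain ⟨g, hgsum, i0, hgi0⟩ := Fintype.not_linearIndependent_iff.mp hnLI
    have htk : 0 < t k := (ht k).1
    have hfe : ∀ j, F1 x j * F2 x j ≤ t k ∧ 0 ≤ F1 x j ∧ 0 ≤ F2 x j := (hz k).1
    have hHpos : ∀ j, j ∈ Hset F1 F2 (t k) x → 0 < F1 x j ∧ 0 < F2 x j := by
      intro j hj
      have hj' : F1 x j * F2 x j = t k := hj
      have h1 : 0 < F1 x j * F2 x j := by rw [hj']; exact htk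
      constructor
      · rcases (hfe j).2.1.lt_or_eq with h | h
        · exact h
        · exfalso; rw [← h, zero_mul] at h1; exact lt_irrefl _ h1
      · rcases (hfe j).2.2.lt_or_eq with h | h
        · exact h
        · exfalso; rw [← h, mul_zero] at h1; exact lt_irrefl _ h1
    have hN1H : ∀ j, j ∈ N1set F1 x → j ∉ Hset F1 F2 (t k) x := by
      intro j h1 hH
      have hj' : F1 x j * F2 x j = t k := hH
      have h0 : F1 x j = 0 := h1
      rw [h0, zero_mul] at hj'
      exact htk.ne' hj'.symm
    have hN2H : ∀ j, j ∈ N2set F2 x → j ∉ Hset F1 F2 (t k) x := by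
      intro j h2 hH
      have hj' : F1 x j * F2 x j = t k := hH
      have h0 : F2 x j = 0 := h2
      rw [h0, mul_zero] at hj'
      exact htk.ne' hj'.symm
    set gH : Fin κ → ℝ :=
      fun j => if h : j ∈ Hset F1 F2 (t k) x then g (Sum.inl ⟨j, h⟩) else 0 with hgH
    set g1 : Fin κ → ℝ :=
      fun j => if h : j ∈ N1set F1 x then g (Sum.inr (Sum.inl ⟨j, h⟩)) else 0 with hg1
    set g2 : Fin κ → ℝ :=
      fun j => if h : j ∈ N2set F2 x then g (Sum.inr (Sum.inr ⟨j, h⟩)) else 0 with hg2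
    set c1 : Fin κ → ℝ := fun j => gH j * F2 x j + g1 j with hc1
    set c2 : Fin κ → ℝ := fun j => gH j * F1 x j + g2 j with hc2
    -- the dependence relation in terms of c1, c2
    rw [Fintype.sum_sum_type, Fintype.sum_sum_type] at hgsum
    simp only [Sum.elim_inl, Sum.elim_inr] at hgsum
    have e1 : ∑ a : ↥(Hset F1 F2 (t k) x), g (Sum.inl a) • gradProd F1 F2 a.1 x
        = ∑ j : Fin κ, gH j • gradProd F1 F2 j x := by
      rw [← sum_subtype_of_zero_off (Hset F1 F2 (t k) x)
          (fun j => gH j • gradProd F1 F2 j x)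
          (fun j hj => by simp only [hgH]; rw [dif_neg hj, zero_smul])]
      refine Finset.sum_congr rfl fun a _ => ?_
      simp only [hgH]
      rw [dif_pos a.2]
    have e2 : ∑ a : ↥(N1set F1 x), g (Sum.inr (Sum.inl a)) • Dc F1 a.1 x
        = ∑ j : Fin κ, g1 j • Dc F1 j x := by
      rw [← sum_subtype_of_zero_off (N1set F1 x)
          (fun j => g1 j • Dc F1 j x)
          (fun j hj => by simp only [hg1]; rw [dif_neg hj, zero_smul])]
      refine Finset.sum_congr rfl fun a _ => ?_
      simp only [hg1]
      rw [dif_pos a.2]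
    have e3 : ∑ a : ↥(N2set F2 x), g (Sum.inr (Sum.inr a)) • Dc F2 a.1 x
        = ∑ j : Fin κ, g2 j • Dc F2 j x := by
      rw [← sum_subtype_of_zero_off (N2set F2 x)
          (fun j => g2 j • Dc F2 j x)
          (fun j hj => by simp only [hg2]; rw [dif_neg hj, zero_smul])]
      refine Finset.sum_congr rfl fun a _ => ?_
      simp only [hg2]
      rw [dif_pos a.2]
    rw [e1, e2, e3] at hgsum
    have hrel : ∑ j : Fin κ, (c1 j • Dc F1 j x + c2 j • Dc F2 j x) = 0 := by
      calc ∑ j : Fin κ, (c1 j • Dc F1 j x + c2 j • Dc F2 j x)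
          = ∑ j : Fin κ, gH j • gradProd F1 F2 j x +
            (∑ j : Fin κ, g1 j • Dc F1 j x + ∑ j : Fin κ, g2 j • Dc F2 j x) := by
            rw [← Finset.sum_add_distrib, ← Finset.sum_add_distrib]
            refine Finset.sum_congr rfl fun j _ => ?_
            simp only [hc1, hc2, gradProd, smul_add, add_smul, mul_smul]
            abel
        _ = 0 := hgsum
    have hprop : ∀ j, c1 j * F1 x j = c2 j * F2 x j := by
      intro j
      by_cases hH : j ∈ Hset F1 F2 (t k) x
      · have h1 : g1 j = 0 := by simp only [hg1]; exact dif_neg (fun h => hN1H j h hH)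
        have h2 : g2 j = 0 := by simp only [hg2]; exact dif_neg (fun h => hN2H j h hH)
        simp only [hc1, hc2, h1, h2, add_zero]
        ring
      · have h0 : gH j = 0 := by simp only [hgH]; exact dif_neg hH
        simp only [hc1, hc2, h0, zero_mul, zero_add]
        by_cases h1 : j ∈ N1set F1 x
        · rw [show F1 x j = 0 from h1, mul_zero]
          by_cases h2 : j ∈ N2set F2 x
          · rw [show F2 x j = 0 from h2, mul_zero]
          · simp only [hg2]; rw [dif_neg h2, zero_mul]
        · simp only [hg1]; rw [dif_neg h1, zero_mul]
          by_cases h2 : j ∈ N2set F2 x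
          · rw [show F2 x j = 0 from h2, mul_zero]
          · simp only [hg2]; rw [dif_neg h2, zero_mul]
    have hnz : (c1, c2) ≠ 0 := by
      intro hzero
      have hzc1 : c1 = 0 := congrArg Prod.fst hzero
      have hzc2 : c2 = 0 := congrArg Prod.snd hzero
      rcases i0 with ⟨j, hj⟩ | ⟨j, hj⟩ | ⟨j, hj⟩
      · have h2 : g2 j = 0 := by simp only [hg2]; exact dif_neg (fun h => hN2H j h hj)
        have hgHj : gH j = g (Sum.inl ⟨j, hj⟩) := by simp only [hgH]; rw [dif_pos hj]
        have hne : c2 j ≠ 0 := by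
          simp only [hc2, h2, add_zero, hgHj]
          exact mul_ne_zero hgi0 (hHpos j hj).1.ne'
        exact hne (by rw [hzc2]; rfl)
      · have h0 : gH j = 0 := by simp only [hgH]; exact dif_neg (hN1H j hj)
        have hne : c1 j ≠ 0 := by
          simp only [hc1, h0, zero_mul, zero_add, hg1]
          rw [dif_pos hj]
          exact hgi0
        exact hne (by rw [hzc1]; rfl)
      · have h0 : gH j = 0 := by simp only [hgH]; exact dif_neg (hN2H j hj)
        have hne : c2 j ≠ 0 := by
          simp only [hc2, h0, zero_mul, zero_add, hg2]
          rw [dif_pos hj]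
          exact hgi0
        exact hne (by rw [hzc2]; rfl)
    have hnorm : 0 < ‖((c1, c2) : (Fin κ → ℝ) × (Fin κ → ℝ))‖ := norm_pos_iff.mpr hnz
    refine ⟨‖((c1, c2) : (Fin κ → ℝ) × (Fin κ → ℝ))‖⁻¹ • (c1, c2), ?_, ?_, ?_⟩
    · rw [norm_smul, norm_inv, norm_norm, inv_mul_cancel₀ hnorm.ne']
    · calc ∑ j : Fin κ, ((‖((c1, c2) : (Fin κ → ℝ) × (Fin κ → ℝ))‖⁻¹ • (c1, c2)).1 j • Dc F1 j x
            + (‖((c1, c2) : (Fin κ → ℝ) × (Fin κ → ℝ))‖⁻¹ • (c1, c2)).2 j • Dc F2 j x)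
          = ‖((c1, c2) : (Fin κ → ℝ) × (Fin κ → ℝ))‖⁻¹ •
              ∑ j : Fin κ, (c1 j • Dc F1 j x + c2 j • Dc F2 j x) := by
            rw [Finset.smul_sum]
            refine Finset.sum_congr rfl fun j _ => ?_
            simp only [Prod.smul_fst, Prod.smul_snd, Pi.smul_apply, smul_eq_mul, smul_add,
              mul_smul]
        _ = 0 := by rw [hrel, smul_zero]
    · intro j
      simp only [Prod.smul_fst, Prod.smul_snd, Pi.smul_apply, smul_eq_mul]
      rw [mul_assoc, mul_assoc, hprop j]
  choose c hcn hcrel hcprop using key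
  -- Step 2: compactness
  obtain ⟨cbar, hcbar_mem, φ, hφ, hφtend⟩ :=
    (isCompact_sphere (0 : (Fin κ → ℝ) × (Fin κ → ℝ)) 1).tendsto_subseq
      (fun k => mem_sphere_zero_iff_norm.mpr (hcn k))
  have hcbar : ‖cbar‖ = 1 := mem_sphere_zero_iff_norm.mp hcbar_mem
  have hztend : Tendsto (fun k => z (φ k)) atTop (𝓝 xbar) := by
    rw [tendsto_iff_dist_tendsto_zero]
    have hb : ∀ k : ℕ, dist (z (φ k)) xbar ≤ 1 / (k + 1) := by
      intro k
      have h1 : dist (z (φ k)) xbar < 1 / ((φ k : ℝ) + 1) := by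
        simpa [Metric.mem_ball] using (hz (φ k)).2
      refine h1.le.trans ?_
      have hk : (k : ℝ) ≤ (φ k : ℝ) := by exact_mod_cast hφ.le_apply
      have h2 : (0:ℝ) < (k : ℝ) + 1 := by positivity
      exact one_div_le_one_div_of_le h2 (by linarith)
    exact squeeze_zero (fun k => dist_nonneg) hb tendsto_one_div_add_atTop_nhds_zero_nat
  have hc1tend : ∀ j : Fin κ, Tendsto (fun k => (c (φ k)).1 j) atTop (𝓝 (cbar.1 j)) := by
    intro j
    exact (((continuous_apply j).comp continuous_fst).tendsto cbar).comp hφtend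
  have hc2tend : ∀ j : Fin κ, Tendsto (fun k => (c (φ k)).2 j) atTop (𝓝 (cbar.2 j)) := by
    intro j
    exact (((continuous_apply j).comp continuous_snd).tendsto cbar).comp hφtend
  have hF1tend : ∀ j : Fin κ, Tendsto (fun k => F1 (z (φ k)) j) atTop (𝓝 (F1 xbar j)) := by
    intro j
    exact (((continuous_apply j).comp hF1.continuous).tendsto xbar).comp hztend
  have hF2tend : ∀ j : Fin κ, Tendsto (fun k => F2 (z (φ k)) j) atTop (𝓝 (F2 xbar j)) := by
    intro j
    exact (((continuous_apply j).comp hF2.continuous).tendsto xbar).comp hztend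
  have hDF1cont : ∀ j : Fin κ, Continuous fun y => Dc F1 j y := by
    intro j
    exact (contDiff_pi.mp hF1 j).continuous_fderiv (by norm_num)
  have hDF2cont : ∀ j : Fin κ, Continuous fun y => Dc F2 j y := by
    intro j
    exact (contDiff_pi.mp hF2 j).continuous_fderiv (by norm_num)
  -- Step 3: pass to the limit
  have hprop_lim : ∀ j, cbar.1 j * F1 xbar j = cbar.2 j * F2 xbar j := by
    intro j
    have h1 : Tendsto (fun k => (c (φ k)).1 j * F1 (z (φ k)) j) atTop
        (𝓝 (cbar.1 j * F1 xbar j)) := (hc1tend j).mul (hF1tend j)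
    have h2 : Tendsto (fun k => (c (φ k)).2 j * F2 (z (φ k)) j) atTop
        (𝓝 (cbar.2 j * F2 xbar j)) := (hc2tend j).mul (hF2tend j)
    have heq : (fun k => (c (φ k)).1 j * F1 (z (φ k)) j)
        = fun k => (c (φ k)).2 j * F2 (z (φ k)) j := funext fun k => hcprop (φ k) j
    rw [heq] at h1
    exact tendsto_nhds_unique h1 h2
  have hrel_lim : ∑ j : Fin κ, (cbar.1 j • Dc F1 j xbar + cbar.2 j • Dc F2 j xbar) = 0 := by
    have hsum : Tendsto (fun k => ∑ j : Fin κ,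
        ((c (φ k)).1 j • Dc F1 j (z (φ k)) + (c (φ k)).2 j • Dc F2 j (z (φ k)))) atTop
        (𝓝 (∑ j : Fin κ, (cbar.1 j • Dc F1 j xbar + cbar.2 j • Dc F2 j xbar))) := by
      refine tendsto_finset_sum _ fun j _ => Tendsto.add ?_ ?_
      · exact (hc1tend j).smul (((hDF1cont j).tendsto xbar).comp hztend)
      · exact (hc2tend j).smul (((hDF2cont j).tendsto xbar).comp hztend)
    have heq : (fun k => ∑ j : Fin κ,
        ((c (φ k)).1 j • Dc F1 j (z (φ k)) + (c (φ k)).2 j • Dc F2 j (z (φ k))))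
        = fun _ => (0 : (Fin n → ℝ) →L[ℝ] ℝ) := funext fun k => hcrel (φ k)
    rw [heq] at hsum
    exact tendsto_nhds_unique hsum tendsto_const_nhds
  -- Step 4: supports
  have hsupp1 : ∀ j, F1 xbar j ≠ 0 → cbar.1 j = 0 := by
    intro j hj
    have hF2z : F2 xbar j = 0 := ((mul_eq_zero.mp (hfeas j).1).resolve_left hj)
    have h := hprop_lim j
    rw [hF2z, mul_zero] at h
    exact (mul_eq_zero.mp h).resolve_right hj
  have hsupp2 : ∀ j, F2 xbar j ≠ 0 → cbar.2 j = 0 := by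
    intro j hj
    have hF1z : F1 xbar j = 0 := ((mul_eq_zero.mp (hfeas j).1).resolve_right hj)
    have h := hprop_lim j
    rw [hF1z, mul_zero] at h
    exact (mul_eq_zero.mp h.symm).resolve_right hj
  have hmem1 : ∀ j, F1 xbar j = 0 → j ∈ a01 F1 F2 xbar ∪ a00 F1 F2 xbar := by
    intro j h0
    rcases (hfeas j).2.2.lt_or_eq with h | h
    · exact Or.inl ⟨h0, h⟩
    · exact Or.inr ⟨h0, h.symm⟩
  have hmem2 : ∀ j, F2 xbar j = 0 → j ∈ a10 F1 F2 xbar ∪ a00 F1 F2 xbar := by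
    intro j h0
    rcases (hfeas j).2.1.lt_or_eq with h | h
    · exact Or.inl ⟨h, h0⟩
    · exact Or.inr ⟨h.symm, h0⟩
  -- Step 5: contradiction with MPCC-LICQ
  have hzero : ∀ i, Sum.elim
      (fun i : ↥(a01 F1 F2 xbar ∪ a00 F1 F2 xbar) => cbar.1 i.1)
      (fun i : ↥(a10 F1 F2 xbar ∪ a00 F1 F2 xbar) => cbar.2 i.1) i = 0 := by
    apply Fintype.linearIndependent_iff.mp hlicq
    rw [Fintype.sum_sum_type]
    simp only [Sum.elim_inl, Sum.elim_inr]
    have e1 : ∑ a : ↥(a01 F1 F2 xbar ∪ a00 F1 F2 xbar), cbar.1 a.1 • Dc F1 a.1 xbar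
        = ∑ j : Fin κ, cbar.1 j • Dc F1 j xbar := by
      refine sum_subtype_of_zero_off (a01 F1 F2 xbar ∪ a00 F1 F2 xbar)
        (fun j => cbar.1 j • Dc F1 j xbar) fun j hj => ?_
      have h1 : F1 xbar j ≠ 0 := fun h0 => hj (hmem1 j h0)
      show cbar.1 j • Dc F1 j xbar = 0
      rw [hsupp1 j h1, zero_smul]
    have e2 : ∑ a : ↥(a10 F1 F2 xbar ∪ a00 F1 F2 xbar), cbar.2 a.1 • Dc F2 a.1 xbar
        = ∑ j : Fin κ, cbar.2 j • Dc F2 j xbar := by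
      refine sum_subtype_of_zero_off (a10 F1 F2 xbar ∪ a00 F1 F2 xbar)
        (fun j => cbar.2 j • Dc F2 j xbar) fun j hj => ?_
      have h2 : F2 xbar j ≠ 0 := fun h0 => hj (hmem2 j h0)
      show cbar.2 j • Dc F2 j xbar = 0
      rw [hsupp2 j h2, zero_smul]
    rw [e1, e2, ← Finset.sum_add_distrib]
    exact hrel_lim
  have hc1zero : cbar.1 = 0 := by
    funext j
    by_cases h : F1 xbar j = 0
    · exact hzero (Sum.inl ⟨j, hmem1 j h⟩)
    · exact hsupp1 j h
  have hc2zero : cbar.2 = 0 := by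
    funext j
    by_cases h : F2 xbar j = 0
    · exact hzero (Sum.inr ⟨j, hmem2 j h⟩)
    · exact hsupp2 j h
  have hcbar0 : cbar = 0 := Prod.ext_iff.mpr ⟨hc1zero, hc2zero⟩
  rw [hcbar0, norm_zero] at hcbar
  exact one_ne_zero hcbar.symm

end MPCCPaper
end

section
/- Let tₖ ↓ 0 and let x^{tₖ} ∈ M^S(tₖ) be KKT points of the Scholtes regularization S(tₖ) with multipliers (η^{tₖ}, ν^{tₖ}) such that x^{tₖ} → x̄, where MPCC-LICQ holds at x̄ ∈ M, so that x̄ is C-stationary with unique multipliers (σ̄, ϱ̄). Then for all sufficiently large k: a01⁻(x̄) ⊆ H(x^{tₖ}) and a01⁺(x̄) ⊆ N₁(x^{tₖ}); a10⁻(x̄) ⊆ H(x^{tₖ}) and a10⁺(x̄) ⊆ N₂(x^{tₖ}); a00⁻(x̄) ⊆ H(x^{tₖ}) and a00⁺(x̄) ⊆ N₁(x^{tₖ}) ∩ N₂(x^{tₖ}). -/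
open Filter Topology Set

section LinearIndependent

variable {ι E : Type*} [Fintype ι] [NormedAddCommGroup E] [NormedSpace ℝ E]

theorem LinearIndependent.exists_pos_mul_norm_le {w : ι → E} (hw : LinearIndependent ℝ w) :
    ∃ r > 0, ∀ c : ι → ℝ, r * ‖c‖ ≤ ‖∑ i, c i • w i‖ := by
  obtain ⟨K, -, hK⟩ := (Fintype.linearCombination ℝ w).injective_iff_antilipschitz.1
    (linearIndependent_iff_injective_fintypeLinearCombination.1 hw)
  simpa [Fintype.linearCombination_apply] using antilipschitzWith_iff_exists_mul_le_norm.1 ⟨K, hK⟩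

theorem norm_sum_smul_sub_sum_smul_le (c : ι → ℝ) (v w : ι → E) :
    ‖∑ i, c i • v i - ∑ i, c i • w i‖ ≤ (∑ i, ‖v i - w i‖) * ‖c‖ := by
  rw [← Finset.sum_sub_distrib, Finset.sum_mul]
  refine (norm_sum_le _ _).trans (Finset.sum_le_sum fun i _ => ?_)
  rw [← smul_sub, norm_smul, mul_comm]
  exact mul_le_mul_of_nonneg_left (norm_le_pi_norm c i) (norm_nonneg _)

theorem LinearIndependent.tendsto_of_tendsto_sum_smul {α : Type*} {l : Filter α} {w : ι → E}
    (hw : LinearIndependent ℝ w) {v : α → ι → E} (hv : Tendsto v l (𝓝 w))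
    {c : α → ι → ℝ} {c₀ : ι → ℝ}
    (hc : Tendsto (fun a => ∑ i, c a i • v a i) l (𝓝 (∑ i, c₀ i • w i))) :
    Tendsto c l (𝓝 c₀) := by
  obtain ⟨r, hr, hrw⟩ := hw.exists_pos_mul_norm_le
  set δ : α → ℝ := fun a => ∑ i, ‖v a i - w i‖
  set e : α → ℝ := fun a => ‖∑ i, c a i • v a i - ∑ i, c₀ i • w i‖
  have hδ : Tendsto δ l (𝓝 0) := by
    simpa using tendsto_finsetSum _ fun i _ => ((tendsto_pi_nhds.1 hv i).sub_const (w i)).norm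
  have key : ∀ a, r * ‖c a - c₀‖ ≤ δ a * (‖c a - c₀‖ + ‖c₀‖) + e a := fun a =>
    calc r * ‖c a - c₀‖ ≤ ‖∑ i, (c a - c₀) i • w i‖ := hrw _
      _ = ‖(∑ i, c a i • w i - ∑ i, c a i • v a i)
            + (∑ i, c a i • v a i - ∑ i, c₀ i • w i)‖ := by
          simp only [Pi.sub_apply, sub_smul, Finset.sum_sub_distrib, sub_add_sub_cancel]
      _ ≤ δ a * ‖c a‖ + e a := by
          refine norm_add_le_of_le ?_ le_rfl
          rw [norm_sub_rev]
          exact norm_sum_smul_sub_sum_smul_le _ _ _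
      _ ≤ δ a * (‖c a - c₀‖ + ‖c₀‖) + e a := by
          gcongr
          exact norm_le_norm_sub_add _ _
  -- once `δ ≤ r / 2`, the term `δ * ‖c - c₀‖` is absorbed by the left-hand side
  have hbound : ∀ᶠ a in l, ‖c a - c₀‖ ≤ 2 / r * (δ a * ‖c₀‖ + e a) := by
    filter_upwards [hδ.eventually (ge_mem_nhds (half_pos hr))] with a ha
    rw [div_mul_eq_mul_div, le_div_iff₀ hr]
    nlinarith [key a, norm_nonneg (c a - c₀)]
  rw [tendsto_iff_norm_sub_tendsto_zero]
  refine squeeze_zero' (Eventually.of_forall fun a => norm_nonneg _) hbound ?_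
  simpa using ((hδ.mul_const ‖c₀‖).add (tendsto_iff_norm_sub_tendsto_zero.1 hc)).const_mul (2 / r)

end LinearIndependent

theorem Fintype.sum_sum_elim_subtype_smul {α R E : Type*} [Fintype α] [Semiring R]
    [AddCommMonoid E] [Module R E] (s t : Set α) [Fintype s] [Fintype t]
    [DecidablePred (· ∈ s)] [DecidablePred (· ∈ t)] (a b : α → R) (u v : α → E) :
    ∑ i : s ⊕ t, Sum.elim (fun j : s => a j) (fun j : t => b j) i •
        Sum.elim (fun j : s => u j) (fun j : t => v j) i =
      ∑ j, ((if j ∈ s then a j • u j else 0) + (if j ∈ t then b j • v j else 0)) := by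
  simp only [Fintype.sum_sum_type, Sum.elim_inl, Sum.elim_inr, Finset.sum_add_distrib,
    ← Finset.sum_filter]
  rw [Finset.sum_subtype (Finset.univ.filter (· ∈ s)) (p := (· ∈ s)) (by simp),
    Finset.sum_subtype (Finset.univ.filter (· ∈ t)) (p := (· ∈ t)) (by simp)]

namespace MPCCPaper

variable {n κ : ℕ} {f : (Fin n → ℝ) → ℝ} {F1 F2 : (Fin n → ℝ) → Fin κ → ℝ}

theorem continuous_Dc {F : (Fin n → ℝ) → Fin κ → ℝ} (hF : ContDiff ℝ 1 F) (j : Fin κ) :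
    Continuous (Dc F j) :=
  (contDiff_pi.1 hF j).continuous_fderiv one_ne_zero

theorem mem_a01_or_mem_a10_or_mem_a00 {x : Fin n → ℝ} (hx : x ∈ Mset F1 F2) (j : Fin κ) :
    j ∈ a01 F1 F2 x ∨ j ∈ a10 F1 F2 x ∨ j ∈ a00 F1 F2 x := by
  obtain ⟨hprod, h1, h2⟩ := hx j
  rcases mul_eq_zero.1 hprod with h | h
  · rcases h2.lt_or_eq with h2 | h2
    exacts [Or.inl ⟨h, h2⟩, Or.inr (Or.inr ⟨h, h2.symm⟩)]
  · rcases h1.lt_or_eq with h1 | h1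
    exacts [Or.inr (Or.inl ⟨h1, h⟩), Or.inr (Or.inr ⟨h1.symm, h⟩)]

open scoped Classical in
noncomputable def mergedDc1 (F1 F2 : (Fin n → ℝ) → Fin κ → ℝ) (xbar : Fin n → ℝ) (j : Fin κ)
    (y : Fin n → ℝ) : (Fin n → ℝ) →L[ℝ] ℝ :=
  if j ∈ a01 F1 F2 xbar then Dc F1 j y + (F1 y j / F2 y j) • Dc F2 j y else Dc F1 j y

open scoped Classical in
noncomputable def mergedDc2 (F1 F2 : (Fin n → ℝ) → Fin κ → ℝ) (xbar : Fin n → ℝ) (j : Fin κ)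
    (y : Fin n → ℝ) : (Fin n → ℝ) →L[ℝ] ℝ :=
  if j ∈ a10 F1 F2 xbar then Dc F2 j y + (F2 y j / F1 y j) • Dc F1 j y else Dc F2 j y

theorem tendsto_mergedDc1 (hF1 : ContDiff ℝ 1 F1) (hF2 : ContDiff ℝ 1 F2) (xbar : Fin n → ℝ)
    (j : Fin κ) : Tendsto (mergedDc1 F1 F2 xbar j) (𝓝 xbar) (𝓝 (Dc F1 j xbar)) := by
  unfold mergedDc1
  split_ifs with hj
  · have hc : ContinuousAt (fun y => Dc F1 j y + (F1 y j / F2 y j) • Dc F2 j y) xbar :=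
      (continuous_Dc hF1 j).continuousAt.add
        ((((continuous_apply j).comp hF1.continuous).continuousAt.div
          ((continuous_apply j).comp hF2.continuous).continuousAt hj.2.ne').smul
          (continuous_Dc hF2 j).continuousAt)
    simpa [hj.1] using hc.tendsto
  · exact (continuous_Dc hF1 j).tendsto xbar

theorem tendsto_mergedDc2 (hF1 : ContDiff ℝ 1 F1) (hF2 : ContDiff ℝ 1 F2) (xbar : Fin n → ℝ)
    (j : Fin κ) : Tendsto (mergedDc2 F1 F2 xbar j) (𝓝 xbar) (𝓝 (Dc F2 j xbar)) := by
  unfold mergedDc2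
  split_ifs with hj
  · have hc : ContinuousAt (fun y => Dc F2 j y + (F2 y j / F1 y j) • Dc F1 j y) xbar :=
      (continuous_Dc hF2 j).continuousAt.add
        ((((continuous_apply j).comp hF2.continuous).continuousAt.div
          ((continuous_apply j).comp hF1.continuous).continuousAt hj.1.ne').smul
          (continuous_Dc hF1 j).continuousAt)
    simpa [hj.2] using hc.tendsto
  · exact (continuous_Dc hF2 j).tendsto xbar

namespace WStatWith

variable {x : Fin n → ℝ} {σ1 σ2 ϱ1 ϱ2 : Fin κ → ℝ}

theorem fderiv_eq_sum_licq [Fintype ↥(a01 F1 F2 x ∪ a00 F1 F2 x)]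
    [Fintype ↥(a10 F1 F2 x ∪ a00 F1 F2 x)] [DecidablePred (· ∈ a01 F1 F2 x ∪ a00 F1 F2 x)]
    [DecidablePred (· ∈ a10 F1 F2 x ∪ a00 F1 F2 x)]
    (h : WStatWith f F1 F2 x σ1 σ2 ϱ1 ϱ2) :
    fderiv ℝ f x = ∑ i : ↥(a01 F1 F2 x ∪ a00 F1 F2 x) ⊕ ↥(a10 F1 F2 x ∪ a00 F1 F2 x),
      Sum.elim (fun j => σ1 j.1 + ϱ1 j.1) (fun j => σ2 j.1 + ϱ2 j.1) i •
        Sum.elim (fun j => Dc F1 j.1 x) (fun j => Dc F2 j.1 x) i := by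
  rw [Fintype.sum_sum_elim_subtype_smul _ _ (fun j => σ1 j + ϱ1 j) (fun j => σ2 j + ϱ2 j)
    (fun j => Dc F1 j x) (fun j => Dc F2 j x), h.stat]
  refine Finset.sum_congr rfl fun j _ => ?_
  have e1 : (if j ∈ a01 F1 F2 x ∪ a00 F1 F2 x then (σ1 j + ϱ1 j) • Dc F1 j x else 0) =
      (σ1 j + ϱ1 j) • Dc F1 j x := ite_eq_left_iff.2 fun hj => by
    rw [h.supp_s1 j fun h' => hj (Or.inl h'), h.supp_r1 j fun h' => hj (Or.inr h'), add_zero,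
      zero_smul]
  have e2 : (if j ∈ a10 F1 F2 x ∪ a00 F1 F2 x then (σ2 j + ϱ2 j) • Dc F2 j x else 0) =
      (σ2 j + ϱ2 j) • Dc F2 j x := ite_eq_left_iff.2 fun hj => by
    rw [h.supp_s2 j fun h' => hj (Or.inl h'), h.supp_r2 j fun h' => hj (Or.inr h'), add_zero,
      zero_smul]
  rw [e1, e2]
  module

end WStatWith

namespace KKTWith

variable {t : ℝ} {y : Fin n → ℝ} {η ν1 ν2 : Fin κ → ℝ} {j : Fin κ}

theorem fderiv_eq_sum (h : KKTWith f F1 F2 t y η ν1 ν2) :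
    fderiv ℝ f y = ∑ j, ((ν1 j - η j * F2 y j) • Dc F1 j y +
      (ν2 j - η j * F1 y j) • Dc F2 j y) := by
  rw [h.stat]
  refine Finset.sum_congr rfl fun j _ => ?_
  simp only [gradProd]
  module

theorem coeff2_eq_div_mul_coeff1 (h : KKTWith f F1 F2 t y η ν1 ν2) (hj : 0 < F2 y j) :
    ν2 j - η j * F1 y j = F1 y j / F2 y j * (ν1 j - η j * F2 y j) := by
  have hν2 : ν2 j = 0 := (mul_eq_zero.1 (h.comp_nu2 j)).resolve_right hj.ne'
  field_simp
  linear_combination F2 y j * hν2 - h.comp_nu1 j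

theorem coeff1_eq_div_mul_coeff2 (h : KKTWith f F1 F2 t y η ν1 ν2) (hj : 0 < F1 y j) :
    ν1 j - η j * F2 y j = F2 y j / F1 y j * (ν2 j - η j * F1 y j) := by
  have hν1 : ν1 j = 0 := (mul_eq_zero.1 (h.comp_nu1 j)).resolve_right hj.ne'
  field_simp
  linear_combination F1 y j * hν1 - h.comp_nu2 j

theorem fderiv_eq_sum_mergedDc {xbar : Fin n → ℝ}
    [Fintype ↥(a01 F1 F2 xbar ∪ a00 F1 F2 xbar)] [Fintype ↥(a10 F1 F2 xbar ∪ a00 F1 F2 xbar)]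
    [DecidablePred (· ∈ a01 F1 F2 xbar ∪ a00 F1 F2 xbar)]
    [DecidablePred (· ∈ a10 F1 F2 xbar ∪ a00 F1 F2 xbar)]
    (h : KKTWith f F1 F2 t y η ν1 ν2) (hxbar : xbar ∈ Mset F1 F2)
    (h01 : ∀ j ∈ a01 F1 F2 xbar, 0 < F2 y j) (h10 : ∀ j ∈ a10 F1 F2 xbar, 0 < F1 y j) :
    fderiv ℝ f y =
      ∑ i : ↥(a01 F1 F2 xbar ∪ a00 F1 F2 xbar) ⊕ ↥(a10 F1 F2 xbar ∪ a00 F1 F2 xbar),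
        Sum.elim (fun j => ν1 j.1 - η j.1 * F2 y j.1) (fun j => ν2 j.1 - η j.1 * F1 y j.1) i •
          Sum.elim (fun j => mergedDc1 F1 F2 xbar j.1 y)
            (fun j => mergedDc2 F1 F2 xbar j.1 y) i := by
  rw [Fintype.sum_sum_elim_subtype_smul _ _ (fun j => ν1 j - η j * F2 y j)
    (fun j => ν2 j - η j * F1 y j) (fun j => mergedDc1 F1 F2 xbar j y)
    (fun j => mergedDc2 F1 F2 xbar j y), h.fderiv_eq_sum]
  refine Finset.sum_congr rfl fun j _ => ?_
  rcases mem_a01_or_mem_a10_or_mem_a00 hxbar j with hj | hj | hj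
  · have hj' : j ∉ a10 F1 F2 xbar ∪ a00 F1 F2 xbar := by
      rintro (h' | h')
      exacts [h'.1.ne' hj.1, hj.2.ne' h'.2]
    rw [if_pos (mem_union_left _ hj), if_neg hj', mergedDc1, if_pos hj,
      h.coeff2_eq_div_mul_coeff1 (h01 j hj)]
    module
  · have hj' : j ∉ a01 F1 F2 xbar ∪ a00 F1 F2 xbar := by
      rintro (h' | h')
      exacts [hj.1.ne' h'.1, hj.1.ne' h'.1]
    rw [if_neg hj', if_pos (mem_union_left _ hj), mergedDc2, if_pos hj,
      h.coeff1_eq_div_mul_coeff2 (h10 j hj)]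
    module
  · have n01 : j ∉ a01 F1 F2 xbar := fun h' => h'.2.ne' hj.2
    have n10 : j ∉ a10 F1 F2 xbar := fun h' => h'.1.ne' hj.1
    rw [if_pos (mem_union_right _ hj), if_pos (mem_union_right _ hj), mergedDc1, mergedDc2,
      if_neg n01, if_neg n10]

theorem mem_Hset_of_ne_zero (h : KKTWith f F1 F2 t y η ν1 ν2) (hj : η j ≠ 0) :
    j ∈ Hset F1 F2 t y :=
  (sub_eq_zero.1 ((mul_eq_zero.1 (h.comp_eta j)).resolve_left hj)).symm

theorem mem_Hset_of_coeff1_neg (h : KKTWith f F1 F2 t y η ν1 ν2)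
    (hj : ν1 j - η j * F2 y j < 0) : j ∈ Hset F1 F2 t y :=
  h.mem_Hset_of_ne_zero fun h0 => by
    rw [h0, zero_mul, sub_zero] at hj
    exact (h.nu1_nn j).not_gt hj

theorem mem_Hset_of_coeff2_neg (h : KKTWith f F1 F2 t y η ν1 ν2)
    (hj : ν2 j - η j * F1 y j < 0) : j ∈ Hset F1 F2 t y :=
  h.mem_Hset_of_ne_zero fun h0 => by
    rw [h0, zero_mul, sub_zero] at hj
    exact (h.nu2_nn j).not_gt hj

theorem mem_N1set_of_coeff1_pos (h : KKTWith f F1 F2 t y η ν1 ν2)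
    (hj : 0 < ν1 j - η j * F2 y j) : j ∈ N1set F1 y := by
  have hν1 : 0 < ν1 j := by linarith [mul_nonneg (h.eta_nn j) (h.feas j).2.2]
  exact (mul_eq_zero.1 (h.comp_nu1 j)).resolve_left hν1.ne'

theorem mem_N2set_of_coeff2_pos (h : KKTWith f F1 F2 t y η ν1 ν2)
    (hj : 0 < ν2 j - η j * F1 y j) : j ∈ N2set F2 y := by
  have hν2 : 0 < ν2 j := by linarith [mul_nonneg (h.eta_nn j) (h.feas j).2.1]
  exact (mul_eq_zero.1 (h.comp_nu2 j)).resolve_left hν2.ne'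

end KKTWith

theorem tendsto_kkt_coeff_licq {α : Type*} {l : Filter α} (hf : ContDiff ℝ 1 f)
    (hF1 : ContDiff ℝ 1 F1) (hF2 : ContDiff ℝ 1 F2) {t : α → ℝ} {x : α → Fin n → ℝ}
    {η ν1 ν2 : α → Fin κ → ℝ} (hkkt : ∀ a, KKTWith f F1 F2 (t a) (x a) (η a) (ν1 a) (ν2 a))
    {xbar : Fin n → ℝ} (hx : Tendsto x l (𝓝 xbar)) (hlicq : MPCCLICQ F1 F2 xbar)
    {σ1 σ2 ϱ1 ϱ2 : Fin κ → ℝ} (hw : WStatWith f F1 F2 xbar σ1 σ2 ϱ1 ϱ2) :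
    (∀ j ∈ a01 F1 F2 xbar ∪ a00 F1 F2 xbar,
      Tendsto (fun a => ν1 a j - η a j * F2 (x a) j) l (𝓝 (σ1 j + ϱ1 j))) ∧
    (∀ j ∈ a10 F1 F2 xbar ∪ a00 F1 F2 xbar,
      Tendsto (fun a => ν2 a j - η a j * F1 (x a) j) l (𝓝 (σ2 j + ϱ2 j))) := by
  classical
  have hFx : ∀ {F : (Fin n → ℝ) → Fin κ → ℝ}, ContDiff ℝ 1 F → ∀ j,
      Tendsto (fun a => F (x a) j) l (𝓝 (F xbar j)) := fun hF j =>
    (((continuous_apply j).comp hF.continuous).tendsto xbar).comp hx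
  have hpos : ∀ᶠ a in l,
      (∀ j ∈ a01 F1 F2 xbar, 0 < F2 (x a) j) ∧ (∀ j ∈ a10 F1 F2 xbar, 0 < F1 (x a) j) :=
    ((toFinite _).eventually_all.2 fun j hj => (hFx hF2 j).eventually (lt_mem_nhds hj.2)).and
      ((toFinite _).eventually_all.2 fun j hj => (hFx hF1 j).eventually (lt_mem_nhds hj.1))
  have hV : Tendsto (fun a => Sum.elim
      (fun j : ↥(a01 F1 F2 xbar ∪ a00 F1 F2 xbar) => mergedDc1 F1 F2 xbar j.1 (x a))
      (fun j : ↥(a10 F1 F2 xbar ∪ a00 F1 F2 xbar) => mergedDc2 F1 F2 xbar j.1 (x a))) l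
      (𝓝 (Sum.elim (fun j : ↥(a01 F1 F2 xbar ∪ a00 F1 F2 xbar) => Dc F1 j.1 xbar)
        (fun j : ↥(a10 F1 F2 xbar ∪ a00 F1 F2 xbar) => Dc F2 j.1 xbar))) :=
    tendsto_pi_nhds.2 (Sum.forall.2 ⟨fun j => (tendsto_mergedDc1 hF1 hF2 xbar j).comp hx,
      fun j => (tendsto_mergedDc2 hF1 hF2 xbar j).comp hx⟩)
  have hDf : Tendsto (fun a => fderiv ℝ f (x a)) l (𝓝 (fderiv ℝ f xbar)) :=
    ((hf.continuous_fderiv one_ne_zero).tendsto xbar).comp hx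
  rw [hw.fderiv_eq_sum_licq] at hDf
  have hc := tendsto_pi_nhds.1 <| LinearIndependent.tendsto_of_tendsto_sum_smul hlicq hV <|
    hDf.congr' <| hpos.mono fun a ha => (hkkt a).fderiv_eq_sum_mergedDc hw.feas ha.1 ha.2
  exact ⟨fun j hj => hc (.inl ⟨j, hj⟩), fun j hj => hc (.inr ⟨j, hj⟩)⟩

theorem tendsto_kkt_coeff {α : Type*} {l : Filter α} (hf : ContDiff ℝ 1 f)
    (hF1 : ContDiff ℝ 1 F1) (hF2 : ContDiff ℝ 1 F2) {t : α → ℝ} {x : α → Fin n → ℝ}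
    {η ν1 ν2 : α → Fin κ → ℝ} (hkkt : ∀ a, KKTWith f F1 F2 (t a) (x a) (η a) (ν1 a) (ν2 a))
    {xbar : Fin n → ℝ} (hx : Tendsto x l (𝓝 xbar)) (hlicq : MPCCLICQ F1 F2 xbar)
    {σ1 σ2 ϱ1 ϱ2 : Fin κ → ℝ} (hw : WStatWith f F1 F2 xbar σ1 σ2 ϱ1 ϱ2) :
    (∀ j ∈ a01 F1 F2 xbar, Tendsto (fun a => ν1 a j - η a j * F2 (x a) j) l (𝓝 (σ1 j))) ∧
    (∀ j ∈ a10 F1 F2 xbar, Tendsto (fun a => ν2 a j - η a j * F1 (x a) j) l (𝓝 (σ2 j))) ∧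
    (∀ j ∈ a00 F1 F2 xbar, Tendsto (fun a => ν1 a j - η a j * F2 (x a) j) l (𝓝 (ϱ1 j)) ∧
      Tendsto (fun a => ν2 a j - η a j * F1 (x a) j) l (𝓝 (ϱ2 j))) := by
  obtain ⟨h1, h2⟩ := tendsto_kkt_coeff_licq hf hF1 hF2 hkkt hx hlicq hw
  refine ⟨fun j hj => ?_, fun j hj => ?_, fun j hj => ⟨?_, ?_⟩⟩
  · simpa [hw.supp_r1 j fun h => hj.2.ne' h.2] using h1 j (.inl hj)
  · simpa [hw.supp_r2 j fun h => hj.1.ne' h.1] using h2 j (.inl hj)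
  · simpa [hw.supp_s1 j fun h => h.2.ne' hj.2] using h1 j (.inr hj)
  · simpa [hw.supp_s2 j fun h => h.1.ne' hj.1] using h2 j (.inr hj)

theorem scholtes_active_index_sets_general
    {n κ : ℕ} (f : (Fin n → ℝ) → ℝ) (F1 F2 : (Fin n → ℝ) → Fin κ → ℝ)
    (hf : ContDiff ℝ 2 f) (hF1 : ContDiff ℝ 2 F1) (hF2 : ContDiff ℝ 2 F2)
    (t : ℕ → ℝ)
    (x : ℕ → Fin n → ℝ) (η ν1 ν2 : ℕ → Fin κ → ℝ)
    (hkkt : ∀ k, KKTWith f F1 F2 (t k) (x k) (η k) (ν1 k) (ν2 k))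
    (xbar : Fin n → ℝ) (hxlim : Tendsto x atTop (𝓝 xbar))
    (hlicq : MPCCLICQ F1 F2 xbar)
    (σ1 σ2 ϱ1 ϱ2 : Fin κ → ℝ) (hcstat : CStatWith f F1 F2 xbar σ1 σ2 ϱ1 ϱ2) :
    ∃ N : ℕ, ∀ k ≥ N,
      {j | j ∈ a01 F1 F2 xbar ∧ σ1 j < 0} ⊆ Hset F1 F2 (t k) (x k) ∧
      {j | j ∈ a01 F1 F2 xbar ∧ 0 < σ1 j} ⊆ N1set F1 (x k) ∧
      {j | j ∈ a10 F1 F2 xbar ∧ σ2 j < 0} ⊆ Hset F1 F2 (t k) (x k) ∧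
      {j | j ∈ a10 F1 F2 xbar ∧ 0 < σ2 j} ⊆ N2set F2 (x k) ∧
      {j | j ∈ a00 F1 F2 xbar ∧ ϱ1 j < 0 ∧ ϱ2 j < 0} ⊆ Hset F1 F2 (t k) (x k) ∧
      {j | j ∈ a00 F1 F2 xbar ∧ 0 < ϱ1 j ∧ 0 < ϱ2 j} ⊆
        N1set F1 (x k) ∩ N2set F2 (x k) := by
  obtain ⟨h01, h10, h00⟩ := tendsto_kkt_coeff (hf.of_le one_le_two) (hF1.of_le one_le_two)
    (hF2.of_le one_le_two) hkkt hxlim hlicq hcstat.1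
  refine eventually_atTop.1 <| (eventually_subset_of_finite (toFinite _) ?_).and <|
    (eventually_subset_of_finite (toFinite _) ?_).and <|
    (eventually_subset_of_finite (toFinite _) ?_).and <|
    (eventually_subset_of_finite (toFinite _) ?_).and <|
    (eventually_subset_of_finite (toFinite _) ?_).and (eventually_subset_of_finite (toFinite _) ?_)
  · exact fun j ⟨hj, hs⟩ => ((h01 j hj).eventually (gt_mem_nhds hs)).mono fun k =>
      (hkkt k).mem_Hset_of_coeff1_neg
  · exact fun j ⟨hj, hs⟩ => ((h01 j hj).eventually (lt_mem_nhds hs)).mono fun k =>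
      (hkkt k).mem_N1set_of_coeff1_pos
  · exact fun j ⟨hj, hs⟩ => ((h10 j hj).eventually (gt_mem_nhds hs)).mono fun k =>
      (hkkt k).mem_Hset_of_coeff2_neg
  · exact fun j ⟨hj, hs⟩ => ((h10 j hj).eventually (lt_mem_nhds hs)).mono fun k =>
      (hkkt k).mem_N2set_of_coeff2_pos
  · exact fun j ⟨hj, hs, _⟩ => (((h00 j hj).1).eventually (gt_mem_nhds hs)).mono fun k =>
      (hkkt k).mem_Hset_of_coeff1_neg
  · exact fun j ⟨hj, hs1, hs2⟩ =>
      ((((h00 j hj).1).eventually (lt_mem_nhds hs1)).mono fun k =>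
        (hkkt k).mem_N1set_of_coeff1_pos).and
      ((((h00 j hj).2).eventually (lt_mem_nhds hs2)).mono fun k =>
        (hkkt k).mem_N2set_of_coeff2_pos)

/-- eventual inclusions of the signed active index subsets of the limiting
C-stationary point into the active index sets of the approximating KKT points. -/
theorem scholtes_active_index_sets
    {n κ : ℕ} (f : (Fin n → ℝ) → ℝ) (F1 F2 : (Fin n → ℝ) → Fin κ → ℝ)
    (hf : ContDiff ℝ 2 f) (hF1 : ContDiff ℝ 2 F1) (hF2 : ContDiff ℝ 2 F2)
    (t : ℕ → ℝ) (htpos : ∀ k, 0 < t k) (ht0 : Tendsto t atTop (𝓝 0))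
    (x : ℕ → Fin n → ℝ) (η ν1 ν2 : ℕ → Fin κ → ℝ)
    (hkkt : ∀ k, KKTWith f F1 F2 (t k) (x k) (η k) (ν1 k) (ν2 k))
    (xbar : Fin n → ℝ) (hxlim : Tendsto x atTop (𝓝 xbar))
    (hfeas : xbar ∈ Mset F1 F2) (hlicq : MPCCLICQ F1 F2 xbar)
    (σ1 σ2 ϱ1 ϱ2 : Fin κ → ℝ) (hcstat : CStatWith f F1 F2 xbar σ1 σ2 ϱ1 ϱ2) :
    ∃ N : ℕ, ∀ k ≥ N,
      {j | j ∈ a01 F1 F2 xbar ∧ σ1 j < 0} ⊆ Hset F1 F2 (t k) (x k) ∧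
      {j | j ∈ a01 F1 F2 xbar ∧ 0 < σ1 j} ⊆ N1set F1 (x k) ∧
      {j | j ∈ a10 F1 F2 xbar ∧ σ2 j < 0} ⊆ Hset F1 F2 (t k) (x k) ∧
      {j | j ∈ a10 F1 F2 xbar ∧ 0 < σ2 j} ⊆ N2set F2 (x k) ∧
      {j | j ∈ a00 F1 F2 xbar ∧ ϱ1 j < 0 ∧ ϱ2 j < 0} ⊆ Hset F1 F2 (t k) (x k) ∧
      {j | j ∈ a00 F1 F2 xbar ∧ 0 < ϱ1 j ∧ 0 < ϱ2 j} ⊆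
        N1set F1 (x k) ∩ N2set F2 (x k) :=
  scholtes_active_index_sets_general f F1 F2 hf hF1 hF2 t x η ν1 ν2 hkkt xbar hxlim hlicq σ1 σ2 ϱ1
    ϱ2 hcstat

end MPCCPaper
end

section
/- Let n = 3, κ = 3, f(x) = −x₁ − x₂ + 2x₁x₂ + x₃², F₁(x) = (x₁, x₁ + x₂, x₃ − 1), F₂(x) = (x₃ − 2x₂, 2 − x₃, x₁ − x₂ + x₃). For every t ∈ (0,1), the point x^t = (t/2, t/2, 1) is a nondegenerate KKT point of the Scholtes regularization S(t) with H(x^t) = {2}, N₁(x^t) = {3}, N₂(x^t) = ∅, unique multipliers η₂ = 1 − t, ν₁,₃ = 2 − t + t² (all other multipliers zero), and quadratic index equal to 1. -/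
/-!
At `x^t` every constraint function is affine and `f` is quadratic, so all derivatives are
explicit. Only the second product constraint and the third lower bound on `F₁` are active; their
gradients `(1, 1, -t)` and `(0, 0, 1)` are independent, so LICQ holds, and LICQ makes the
multipliers of any KKT point unique, so exhibiting one set of multipliers determines them all.
The tangent space `T^S` is the line through `(1, -1, 0)`, on which the Hessian of the Lagrangian
is `c (1, -1, 0) ↦ -4 c²`. Being negative definite on `T^S`, the form is nondegenerate there and
has quadratic index `dim T^S = 1`.
-/

open Filter Topology Set

namespace MPCCPaper

variable {n κ : ℕ}

noncomputable def fEx2 : (Fin 3 → ℝ) → ℝ :=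
  fun x => -x 0 - x 1 + 2 * x 0 * x 1 + (x 2)^2

noncomputable def F1Ex2 : (Fin 3 → ℝ) → Fin 3 → ℝ :=
  fun x => ![x 0, x 0 + x 1, x 2 - 1]

noncomputable def F2Ex2 : (Fin 3 → ℝ) → Fin 3 → ℝ :=
  fun x => ![x 2 - 2 * x 1, 2 - x 2, x 0 - x 1 + x 2]

noncomputable def xtEx2 (t : ℝ) : Fin 3 → ℝ := ![t/2, t/2, 1]

noncomputable def ηEx2 (t : ℝ) : Fin 3 → ℝ := ![0, 1 - t, 0]

noncomputable def ν1Ex2 (t : ℝ) : Fin 3 → ℝ := ![0, 0, 2 - t + t^2]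

theorem hasFDerivAt_of_eq_quadratic {g : (Fin n → ℝ) → ℝ}
    (B : (Fin n → ℝ) →L[ℝ] (Fin n → ℝ) →L[ℝ] ℝ) (ℓ : (Fin n → ℝ) →L[ℝ] ℝ) (c : ℝ)
    (hg : ∀ y, g y = B y y + ℓ y + c) (x : Fin n → ℝ) :
    HasFDerivAt g ((B + B.flip) x + ℓ) x := by
  rw [show g = fun y => B y y + ℓ y + c from funext hg]
  refine (((B.hasFDerivAt_of_bilinear (hasFDerivAt_id x) (hasFDerivAt_id x)).add
    ℓ.hasFDerivAt).add_const c).congr_fderiv ?_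
  ext ξ
  simp [add_comm]

theorem hBil_of_eq_quadratic {g : (Fin n → ℝ) → ℝ}
    (B : (Fin n → ℝ) →L[ℝ] (Fin n → ℝ) →L[ℝ] ℝ) (ℓ : (Fin n → ℝ) →L[ℝ] ℝ) (c : ℝ)
    (hg : ∀ y, g y = B y y + ℓ y + c) (x ξ ζ : Fin n → ℝ) :
    hBil g x ξ ζ = B ξ ζ + B ζ ξ := by
  have hDg : fderiv ℝ g = fun y => (B + B.flip) y + ℓ :=
    funext fun y => (hasFDerivAt_of_eq_quadratic B ℓ c hg y).fderiv
  rw [hBil, iteratedFDeriv_two_apply, hDg, ((B + B.flip).hasFDerivAt.add_const ℓ).fderiv]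
  simp

theorem Dc_eq_of_eq_affine {F : (Fin n → ℝ) → Fin κ → ℝ} {j : Fin κ}
    (ℓ : (Fin n → ℝ) →L[ℝ] ℝ) (c : ℝ) (hF : ∀ y, F y j = ℓ y + c) (x : Fin n → ℝ) :
    Dc F j x = ℓ := by
  rw [Dc, show (fun y => F y j) = fun y => ℓ y + c from funext hF]
  exact (ℓ.hasFDerivAt.add_const c).fderiv

theorem nondegOn_of_negDefinite {B : (Fin n → ℝ) → (Fin n → ℝ) → ℝ} {T : Set (Fin n → ℝ)}
    (hB : ∀ ξ ∈ T, ξ ≠ 0 → B ξ ξ < 0) : NondegOn B T := by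
  intro ξ hξ hBξ
  by_contra hne
  exact (hB ξ hξ hne).ne (hBξ ξ hξ)

theorem hasNegIndexOn_of_negDefinite {Q : (Fin n → ℝ) → ℝ} (T : Submodule ℝ (Fin n → ℝ))
    (hQ : ∀ ξ ∈ T, ξ ≠ 0 → Q ξ < 0) : HasNegIndexOn Q T (Module.finrank ℝ T) :=
  ⟨⟨T, subset_rfl, rfl, hQ⟩, fun _ hW _ => Submodule.finrank_mono hW⟩

theorem sum_subtype_eq_sum_of_eq_zero {ι M : Type*} [Fintype ι] [AddCommMonoid M]
    (s : Set ι) [DecidablePred (· ∈ s)] (f : ι → M) (hf : ∀ i ∉ s, f i = 0) :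
    ∑ i : s, f i = ∑ i, f i := by
  rw [← Fintype.sum_subtype_add_sum_subtype (· ∈ s) f,
    Fintype.sum_eq_zero (fun i : {i // i ∉ s} => f i) fun i => hf i i.2, add_zero]

section KKT

variable {f : (Fin n → ℝ) → ℝ} {F1 F2 : (Fin n → ℝ) → Fin κ → ℝ} {t : ℝ}
  {x : Fin n → ℝ} {η ν1 ν2 : Fin κ → ℝ}

theorem SLICQ.eq_zero_of_sum_eq_zero (hLICQ : SLICQ F1 F2 t x) {a b1 b2 : Fin κ → ℝ}
    (ha : ∀ j ∉ Hset F1 F2 t x, a j = 0) (hb1 : ∀ j ∉ N1set F1 x, b1 j = 0)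
    (hb2 : ∀ j ∉ N2set F2 x, b2 j = 0)
    (hsum : ∑ j, (a j • gradProd F1 F2 j x + b1 j • Dc F1 j x + b2 j • Dc F2 j x) = 0) :
    a = 0 ∧ b1 = 0 ∧ b2 = 0 := by
  classical
  have hzero := Fintype.linearIndependent_iff.mp hLICQ
    (Sum.elim (fun j => a j) (Sum.elim (fun j => b1 j) (fun j => b2 j))) (by
      simp only [Fintype.sum_sum_type, Sum.elim_inl, Sum.elim_inr]
      rw [sum_subtype_eq_sum_of_eq_zero _ (fun j => a j • gradProd F1 F2 j x)
          fun j hj => by simp [ha j hj],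
        sum_subtype_eq_sum_of_eq_zero _ (fun j => b1 j • Dc F1 j x)
          fun j hj => by simp [hb1 j hj],
        sum_subtype_eq_sum_of_eq_zero _ (fun j => b2 j • Dc F2 j x)
          fun j hj => by simp [hb2 j hj],
        ← Finset.sum_add_distrib, ← Finset.sum_add_distrib]
      simpa only [add_assoc] using hsum)
  refine ⟨funext fun j => ?_, funext fun j => ?_, funext fun j => ?_⟩
  · by_cases hj : j ∈ Hset F1 F2 t x
    exacts [hzero (.inl ⟨j, hj⟩), ha j hj]
  · by_cases hj : j ∈ N1set F1 x
    exacts [hzero (.inr (.inl ⟨j, hj⟩)), hb1 j hj]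
  · by_cases hj : j ∈ N2set F2 x
    exacts [hzero (.inr (.inr ⟨j, hj⟩)), hb2 j hj]

namespace KKTWith

theorem eta_eq_zero_of_notMem (h : KKTWith f F1 F2 t x η ν1 ν2) {j : Fin κ}
    (hj : j ∉ Hset F1 F2 t x) : η j = 0 :=
  (mul_eq_zero.mp (h.comp_eta j)).resolve_right (sub_ne_zero.mpr (Ne.symm hj))

theorem nu1_eq_zero_of_notMem (h : KKTWith f F1 F2 t x η ν1 ν2) {j : Fin κ}
    (hj : j ∉ N1set F1 x) : ν1 j = 0 :=
  (mul_eq_zero.mp (h.comp_nu1 j)).resolve_right hj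

theorem nu2_eq_zero_of_notMem (h : KKTWith f F1 F2 t x η ν1 ν2) {j : Fin κ}
    (hj : j ∉ N2set F2 x) : ν2 j = 0 :=
  (mul_eq_zero.mp (h.comp_nu2 j)).resolve_right hj

theorem eq_of_SLICQ {η' ν1' ν2' : Fin κ → ℝ} (h : KKTWith f F1 F2 t x η ν1 ν2)
    (h' : KKTWith f F1 F2 t x η' ν1' ν2') (hLICQ : SLICQ F1 F2 t x) :
    η = η' ∧ ν1 = ν1' ∧ ν2 = ν2' := by
  have hstat := h.stat.symm.trans h'.stat
  rw [← sub_eq_zero, ← Finset.sum_sub_distrib] at hstat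
  obtain ⟨hη, hν1, hν2⟩ := hLICQ.eq_zero_of_sum_eq_zero (a := η' - η) (b1 := ν1 - ν1')
    (b2 := ν2 - ν2')
    (fun j hj => by simp [h.eta_eq_zero_of_notMem hj, h'.eta_eq_zero_of_notMem hj])
    (fun j hj => by simp [h.nu1_eq_zero_of_notMem hj, h'.nu1_eq_zero_of_notMem hj])
    (fun j hj => by simp [h.nu2_eq_zero_of_notMem hj, h'.nu2_eq_zero_of_notMem hj])
    (by rw [← hstat]; refine Finset.sum_congr rfl fun j _ => ?_; simp only [Pi.sub_apply]; module)
  exact ⟨(sub_eq_zero.mp hη).symm, sub_eq_zero.mp hν1, sub_eq_zero.mp hν2⟩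

end KKTWith

end KKT

section Example

local notation "π" => ContinuousLinearMap.proj (R := ℝ) (φ := fun _ : Fin 3 => ℝ)

variable {t : ℝ}

theorem F1Ex2_xtEx2 (t : ℝ) : F1Ex2 (xtEx2 t) = ![t / 2, t, 0] := by
  ext j; fin_cases j <;> simp [F1Ex2, xtEx2]

theorem F2Ex2_xtEx2 (t : ℝ) : F2Ex2 (xtEx2 t) = ![1 - t, 1, 1] := by
  ext j; fin_cases j <;> simp [F2Ex2, xtEx2] <;> ring

theorem Hset_xtEx2 (ht0 : 0 < t) : Hset F1Ex2 F2Ex2 t (xtEx2 t) = {1} := by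
  ext j
  fin_cases j <;> simp [Hset, F1Ex2_xtEx2, F2Ex2_xtEx2] <;> nlinarith

theorem N1set_xtEx2 (ht0 : 0 < t) : N1set F1Ex2 (xtEx2 t) = {2} := by
  ext j
  fin_cases j <;> simp [N1set, F1Ex2_xtEx2] <;> linarith

theorem N2set_xtEx2 (ht1 : t < 1) : N2set F2Ex2 (xtEx2 t) = ∅ := by
  ext j
  fin_cases j <;> simp [N2set, F2Ex2_xtEx2]
  linarith

theorem fderiv_fEx2_apply (y ξ : Fin 3 → ℝ) :
    fderiv ℝ fEx2 y ξ = (2 * y 1 - 1) * ξ 0 + (2 * y 0 - 1) * ξ 1 + 2 * y 2 * ξ 2 := by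
  rw [(hasFDerivAt_of_eq_quadratic (2 • (π 0).smulRight (π 1) + (π 2).smulRight (π 2))
    (-(π 0) - π 1) 0 (fun y => by simp [fEx2]; ring) y).fderiv]
  simp
  ring

theorem gradProd_one_xtEx2_apply (t : ℝ) (ξ : Fin 3 → ℝ) :
    gradProd F1Ex2 F2Ex2 1 (xtEx2 t) ξ = ξ 0 + ξ 1 - t * ξ 2 := by
  rw [gradProd, Dc_eq_of_eq_affine (π 0 + π 1) 0 (fun y => by simp [F1Ex2]),
    Dc_eq_of_eq_affine (-π 2) 2 (fun y => by simp [F2Ex2]; ring)]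
  simp [F1Ex2_xtEx2, F2Ex2_xtEx2]
  ring

theorem Dc_F1Ex2_two_apply (y ξ : Fin 3 → ℝ) : Dc F1Ex2 2 y ξ = ξ 2 := by
  rw [Dc_eq_of_eq_affine (π 2) (-1) (fun y => by simp [F1Ex2]; ring)]
  simp

theorem hBil_LagS_Ex2 (t : ℝ) (x ξ ζ : Fin 3 → ℝ) :
    hBil (LagS fEx2 F1Ex2 F2Ex2 t (ηEx2 t) (ν1Ex2 t) 0) x ξ ζ =
      2 * (ξ 0 * ζ 1 + ξ 1 * ζ 0 + ξ 2 * ζ 2) -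
        (1 - t) * ((ξ 0 + ξ 1) * ζ 2 + ξ 2 * (ζ 0 + ζ 1)) := by
  rw [hBil_of_eq_quadratic
    (2 • (π 0).smulRight (π 1) + (π 2).smulRight (π 2) - (1 - t) • (π 0 + π 1).smulRight (π 2))
    ((1 - 2 * t) • (π 0 + π 1) - (2 - t + t ^ 2) • π 2) (2 - 2 * t + 2 * t ^ 2)
    (fun y => by simp [LagS, fEx2, F1Ex2, F2Ex2, ηEx2, ν1Ex2, Fin.sum_univ_three]; ring)]
  simp
  ring

theorem kktWith_xtEx2 (ht0 : 0 < t) (ht1 : t < 1) :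
    KKTWith fEx2 F1Ex2 F2Ex2 t (xtEx2 t) (ηEx2 t) (ν1Ex2 t) 0 where
  feas j := by
    fin_cases j <;> refine ⟨?_, ?_, ?_⟩ <;> simp [F1Ex2_xtEx2, F2Ex2_xtEx2] <;> nlinarith
  eta_nn j := by fin_cases j <;> simp [ηEx2]; linarith
  nu1_nn j := by fin_cases j <;> simp [ν1Ex2]; nlinarith
  nu2_nn _ := le_rfl
  comp_eta j := by fin_cases j <;> simp [ηEx2, F1Ex2_xtEx2, F2Ex2_xtEx2]
  comp_nu1 j := by fin_cases j <;> simp [ν1Ex2, F1Ex2_xtEx2]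
  comp_nu2 _ := zero_mul _
  stat := by
    ext ξ
    simp [fderiv_fEx2_apply, Fin.sum_univ_three, ηEx2, ν1Ex2, gradProd_one_xtEx2_apply,
      Dc_F1Ex2_two_apply]
    simp [xtEx2]
    ring

theorem slicq_xtEx2 (ht0 : 0 < t) (ht1 : t < 1) : SLICQ F1Ex2 F2Ex2 t (xtEx2 t) := by
  rw [SLICQ, Hset_xtEx2 ht0, N1set_xtEx2 ht0, N2set_xtEx2 ht1]
  -- `(1, 0, 0)` and `(t, 0, 1)` are dual to the gradients `(1, 1, -t)` and `(0, 0, 1)`.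
  refine LinearIndependent.of_pairwise_dual_eq_zero_one _ (fun i => (ContinuousLinearMap.apply ℝ ℝ
    (Sum.elim (fun _ => ![1, 0, 0]) (Sum.elim (fun _ => ![t, 0, 1]) (fun _ => 0)) i)).toLinearMap)
    ?_ ?_
  · rintro (⟨i, rfl⟩ | ⟨i, rfl⟩ | ⟨i, ⟨⟩⟩) (⟨j, rfl⟩ | ⟨j, rfl⟩ | ⟨j, ⟨⟩⟩) hij <;>
      simp [gradProd_one_xtEx2_apply, Dc_F1Ex2_two_apply] at hij ⊢
  · rintro (⟨i, rfl⟩ | ⟨i, rfl⟩ | ⟨i, ⟨⟩⟩) <;>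
      simp [gradProd_one_xtEx2_apply, Dc_F1Ex2_two_apply]

noncomputable def eEx2 : Fin 3 → ℝ := ![1, -1, 0]

theorem eEx2_ne_zero : eEx2 ≠ 0 := fun h => by simpa [eEx2] using congr_fun h 0

theorem TspaceS_xtEx2 (ht0 : 0 < t) (ht1 : t < 1) :
    TspaceS F1Ex2 F2Ex2 t (xtEx2 t) = (ℝ ∙ eEx2 : Submodule ℝ (Fin 3 → ℝ)) := by
  ext ξ
  simp only [TspaceS, Hset_xtEx2 ht0, N1set_xtEx2 ht0, N2set_xtEx2 ht1, Set.mem_ofPred_eq,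
    Set.mem_singleton_iff, forall_eq, Set.mem_empty_iff_false, IsEmpty.forall_iff,
    implies_true, and_true, gradProd_one_xtEx2_apply, Dc_F1Ex2_two_apply, SetLike.mem_coe,
    Submodule.mem_span_singleton]
  constructor
  · rintro ⟨h1, h2⟩
    rw [h2, mul_zero, sub_zero] at h1
    exact ⟨ξ 0, by ext i; fin_cases i <;> simp [eEx2] <;> linarith⟩
  · rintro ⟨c, rfl⟩
    simp [eEx2]

theorem hQ_LagS_Ex2_lt_zero (ht0 : 0 < t) (ht1 : t < 1) :
    ∀ ξ ∈ TspaceS F1Ex2 F2Ex2 t (xtEx2 t), ξ ≠ 0 →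
      hQ (LagS fEx2 F1Ex2 F2Ex2 t (ηEx2 t) (ν1Ex2 t) 0) (xtEx2 t) ξ < 0 := by
  rw [TspaceS_xtEx2 ht0 ht1]
  rintro ξ hξ hne
  obtain ⟨c, rfl⟩ := Submodule.mem_span_singleton.mp hξ
  have hc : c ≠ 0 := by rintro rfl; simp at hne
  have hQ_eq :
      hQ (LagS fEx2 F1Ex2 F2Ex2 t (ηEx2 t) (ν1Ex2 t) 0) (xtEx2 t) (c • eEx2) = -4 * c ^ 2 := by
    simp [hQ, hBil_LagS_Ex2, eEx2]
    ring
  rw [hQ_eq]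
  nlinarith [sq_pos_of_ne_zero hc]

end Example

/-- Example (necessity of NDC4), the regularized problem: for
`t ∈ (0,1)`, `x^t = (t/2, t/2, 1)` is a nondegenerate KKT point of `S(t)` with the stated
active sets and unique multipliers, and quadratic index `1`. -/
theorem example_ndc4_kkt_points :
    ∀ t ∈ Set.Ioo (0:ℝ) 1,
      NondegKKT fEx2 F1Ex2 F2Ex2 t (xtEx2 t) (ηEx2 t) (ν1Ex2 t) 0 ∧
      Hset F1Ex2 F2Ex2 t (xtEx2 t) = {1} ∧
      N1set F1Ex2 (xtEx2 t) = {2} ∧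
      N2set F2Ex2 (xtEx2 t) = ∅ ∧
      (∀ η ν1 ν2 : Fin 3 → ℝ, KKTWith fEx2 F1Ex2 F2Ex2 t (xtEx2 t) η ν1 ν2 →
        η = ηEx2 t ∧ ν1 = ν1Ex2 t ∧ ν2 = 0) ∧
      HasNegIndexOn (hQ (LagS fEx2 F1Ex2 F2Ex2 t (ηEx2 t) (ν1Ex2 t) 0) (xtEx2 t))
        (TspaceS F1Ex2 F2Ex2 t (xtEx2 t)) 1 := by
  rintro t ⟨ht0, ht1⟩
  have hKKT := kktWith_xtEx2 ht0 ht1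
  have hLICQ := slicq_xtEx2 ht0 ht1
  have hneg := hQ_LagS_Ex2_lt_zero ht0 ht1
  refine ⟨⟨hKKT, hLICQ, ?_, ?_, ?_, nondegOn_of_negDefinite hneg⟩, Hset_xtEx2 ht0,
    N1set_xtEx2 ht0, N2set_xtEx2 ht1, fun η ν1 ν2 h => h.eq_of_SLICQ hKKT hLICQ, ?_⟩
  · simp [Hset_xtEx2 ht0, ηEx2, ht1]
  · simp [N1set_xtEx2 ht0, ν1Ex2]; nlinarith
  · simp [N2set_xtEx2 ht1]
  · rw [TspaceS_xtEx2 ht0 ht1] at hneg ⊢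
    simpa [finrank_span_singleton eEx2_ne_zero] using hasNegIndexOn_of_negDefinite _ hneg

end MPCCPaper
end
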